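/- In the polylogarithmic Lie algebra L^PL, the element (ad e1)^n(e12) is nonzero for every natural number n. -/

import Mathlib

inductive Gamma : Type
  | e1 | e11 | e2 | e22 | e12
deriving DecidableEq

noncomputable section

abbrev FL : Type := FreeLieAlgebra ℚ Gamma

/-- The five generators of the free Lie algebra. -/
def gen (x : Gamma) : FL := FreeLieAlgebra.of ℚ x

/-- The defining relations of the Lie algebra `L`. -/
def relSet : Set FL :=
  {⁅gen .e1, gen .e2⁆, ⁅gen .e11, gen .e2⁆, ⁅gen .e1, gen .e22⁆,
   ⁅gen .e11, gen .e22⁆ - ⁅gen .e2 - gen .e1, gen .e12⁆,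
   (-⁅gen .e11, gen .e12⁆) - ⁅gen .e2 - gen .e1, gen .e12⁆,
   ⁅gen .e22, gen .e12⁆ - ⁅gen .e2 - gen .e1, gen .e12⁆}

/-- The Lie ideal generated by the relations. -/
def relIdeal : LieIdeal ℚ FL := LieSubmodule.lieSpan ℚ FL relSet

/-- The Lie algebra `L`. -/
abbrev Lquot : Type := FL ⧸ relIdeal

/-- Projection `L(Γ) → L`. -/
def mkL : FL → Lquot := LieSubmodule.Quotient.mk (N := relIdeal)

/-- The Lie ideal `N` of `L` generated by `e11`, `e22`, `e12`. -/
def NIdeal : LieIdeal ℚ Lquot :=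
  LieSubmodule.lieSpan ℚ Lquot {mkL (gen .e11), mkL (gen .e22), mkL (gen .e12)}

/-- The Lie ideal `[N, N]`. -/
def NN : LieIdeal ℚ Lquot := ⁅NIdeal, NIdeal⁆

/-- The polylogarithmic Lie algebra `L^PL = L/[N,N]`. -/
abbrev LPL : Type := Lquot ⧸ NN

/-- Projection `L(Γ) → L^PL`. -/
def pl (x : FL) : LPL := LieSubmodule.Quotient.mk (N := NN) (mkL x)

def E1 : LPL := pl (gen .e1)
def E11 : LPL := pl (gen .e11)
def E2 : LPL := pl (gen .e2)
def E22 : LPL := pl (gen .e22)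
def E12 : LPL := pl (gen .e12)

/-- The adjoint action `ad z : w ↦ ⁅z, w⁆` as a linear endomorphism of `L^PL`. -/
def adPL (z : LPL) : Module.End ℚ LPL := LieAlgebra.ad ℚ LPL z

end

/-! ### Auxiliary construction: a concrete witness Lie algebra `GG = ℚ × ℚ[X]` -/

noncomputable section Aux
open Polynomial

set_option linter.unnecessarySeqFocus false

def GG : Type := ℚ × Polynomial ℚ

instance : AddCommGroup GG := inferInstanceAs (AddCommGroup (ℚ × Polynomial ℚ))
instance : Module ℚ GG := inferInstanceAs (Module ℚ (ℚ × Polynomial ℚ))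

def GG.mk (a : ℚ) (p : Polynomial ℚ) : GG := (a, p)
def GG.fst (x : GG) : ℚ := Prod.fst x
def GG.snd (x : GG) : Polynomial ℚ := Prod.snd x

@[simp] lemma GG.fst_mk (a : ℚ) (p : Polynomial ℚ) : (GG.mk a p).fst = a := rfl
@[simp] lemma GG.snd_mk (a : ℚ) (p : Polynomial ℚ) : (GG.mk a p).snd = p := rfl
@[simp] lemma GG.fst_add (x y : GG) : (x + y).fst = x.fst + y.fst := rfl
@[simp] lemma GG.snd_add (x y : GG) : (x + y).snd = x.snd + y.snd := rfl
@[simp] lemma GG.fst_zero : (0 : GG).fst = 0 := rfl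
@[simp] lemma GG.snd_zero : (0 : GG).snd = 0 := rfl
@[simp] lemma GG.fst_smul (t : ℚ) (x : GG) : (t • x).fst = t * x.fst := rfl
@[simp] lemma GG.snd_smul (t : ℚ) (x : GG) : (t • x).snd = t • x.snd := rfl

@[ext] lemma GG.ext {x y : GG} (h1 : x.fst = y.fst) (h2 : x.snd = y.snd) : x = y :=
  Prod.ext h1 h2

instance : Bracket GG GG :=
  ⟨fun x y => GG.mk 0 (X * (C x.fst * y.snd - C y.fst * x.snd))⟩

@[simp] lemma GG.lie_def (x y : GG) :
    ⁅x, y⁆ = GG.mk 0 (X * (C x.fst * y.snd - C y.fst * x.snd)) := rfl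

instance : LieRing GG where
  add_lie x y z := by apply GG.ext <;> simp <;> ring
  lie_add x y z := by apply GG.ext <;> simp <;> ring
  lie_self x := by apply GG.ext <;> simp
  leibniz_lie x y z := by apply GG.ext <;> simp <;> ring

instance : LieAlgebra ℚ GG where
  lie_smul t x y := by
    apply GG.ext <;> simp [Polynomial.smul_eq_C_mul, smul_eq_mul] <;> ring

/-- Images of the generators in `GG`. -/
def f0 : Gamma → GG
  | .e1 => GG.mk 1 0
  | .e2 => GG.mk 1 0
  | .e11 => 0
  | .e22 => 0
  | .e12 => GG.mk 0 1

/-- The induced Lie algebra morphism `FL → GG`. -/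
def phi : FL →ₗ⁅ℚ⁆ GG := FreeLieAlgebra.lift ℚ f0

@[simp] lemma phi_gen (x : Gamma) : phi (gen x) = f0 x :=
  FreeLieAlgebra.lift_of_apply f0 x

lemma hrel : relIdeal ≤ phi.ker := by
  rw [relIdeal, LieSubmodule.lieSpan_le]
  intro x hx
  simp only [relSet, Set.mem_insert_iff, Set.mem_singleton_iff] at hx
  suffices h : phi x = 0 by exact LieHom.mem_ker.mpr h
  rcases hx with rfl | rfl | rfl | rfl | rfl | rfl <;>
    · simp only [LieHom.map_lie, map_sub, map_neg, phi_gen, f0]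
      apply GG.ext <;> simp

/-- The induced linear map on `Lquot`. -/
def phi1 : Lquot →ₗ[ℚ] GG :=
  Submodule.liftQ relIdeal.toSubmodule phi.toLinearMap (fun x hx => LieHom.mem_ker.mp (hrel hx))

@[simp] lemma phi1_mk (x : FL) : phi1 (mkL x) = phi x := rfl

lemma mkL_surj : Function.Surjective mkL := Quot.mk_surjective

lemma mkL_lie (x y : FL) : mkL ⁅x, y⁆ = ⁅mkL x, mkL y⁆ :=
  LieSubmodule.Quotient.mk_bracket relIdeal x y

/-- `phi1` as a Lie algebra morphism. -/
def phi1' : Lquot →ₗ⁅ℚ⁆ GG :=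
  { phi1 with
    map_lie' := by
      intro x y
      obtain ⟨a, rfl⟩ := mkL_surj x
      obtain ⟨b, rfl⟩ := mkL_surj y
      rw [← mkL_lie]
      simp }

@[simp] lemma phi1'_mk (x : FL) : phi1' (mkL x) = phi x := rfl

/-- The abelian ideal `{0} × ℚ[X]` of `GG`. -/
def KId : LieIdeal ℚ GG where
  carrier := {x : GG | x.fst = 0}
  add_mem' := by intro a b ha hb; simp only [Set.mem_setOf_eq] at *; simp [ha, hb]
  zero_mem' := by simp
  smul_mem' := by intro t x hx; simp only [Set.mem_setOf_eq] at *; simp [hx]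
  lie_mem := by intro x m _; simp

lemma mem_KId {x : GG} : x ∈ KId ↔ x.fst = 0 := Iff.rfl

lemma KId_lie_eq_zero {x y : GG} (hx : x ∈ KId) (hy : y ∈ KId) : ⁅x, y⁆ = 0 := by
  rw [mem_KId] at hx hy
  apply GG.ext <;> simp [hx, hy]

lemma hNId : NIdeal ≤ LieIdeal.comap phi1' KId := by
  rw [NIdeal, LieSubmodule.lieSpan_le]
  intro x hx
  simp only [Set.mem_insert_iff, Set.mem_singleton_iff] at hx
  rcases hx with rfl | rfl | rfl <;>
    · show _ ∈ LieIdeal.comap phi1' KId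
      rw [LieIdeal.mem_comap, phi1'_mk, phi_gen, mem_KId]
      simp [f0]

lemma hNN : NN ≤ phi1'.ker := by
  rw [NN, LieSubmodule.lieIdeal_oper_eq_span, LieSubmodule.lieSpan_le]
  rintro z ⟨⟨x, hx⟩, ⟨y, hy⟩, rfl⟩
  have hx' : phi1' x ∈ KId := LieIdeal.mem_comap.mp (hNId hx)
  have hy' : phi1' y ∈ KId := LieIdeal.mem_comap.mp (hNId hy)
  show ⁅x, y⁆ ∈ phi1'.ker
  rw [LieHom.mem_ker, LieHom.map_lie]
  exact KId_lie_eq_zero hx' hy'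

/-- The induced linear map on `LPL`. -/
def psi : LPL →ₗ[ℚ] GG :=
  Submodule.liftQ NN.toSubmodule phi1'.toLinearMap (fun x hx => LieHom.mem_ker.mp (hNN hx))

@[simp] lemma psi_pl (x : FL) : psi (pl x) = phi x := rfl

/-- Iterated bracket `(ad e1)^n e12` in the free Lie algebra. -/
def tt : ℕ → FL
  | 0 => gen .e12
  | n + 1 => ⁅gen .e1, tt n⁆

lemma pl_lie (x y : FL) : pl ⁅x, y⁆ = ⁅pl x, pl y⁆ := by
  unfold pl
  rw [mkL_lie]
  exact LieSubmodule.Quotient.mk_bracket NN _ _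

lemma adPL_pow (n : ℕ) : (adPL E1 ^ n) E12 = pl (tt n) := by
  induction n with
  | zero => rfl
  | succ n ih =>
    rw [pow_succ', Module.End.mul_apply, ih, tt, pl_lie]
    rfl

lemma phi_tt (n : ℕ) : phi (tt n) = GG.mk 0 (Polynomial.X ^ n) := by
  induction n with
  | zero => simp [tt, f0]
  | succ n ih =>
    rw [tt, LieHom.map_lie, ih, phi_gen]
    show (⁅GG.mk 1 0, GG.mk 0 (X ^ n)⁆ : GG) = _
    apply GG.ext <;> simp [pow_succ, mul_comm]

end Aux

theorem stmt6 (n : ℕ) : (adPL E1 ^ n) E12 ≠ 0 := by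
  intro h
  have h2 : psi ((adPL E1 ^ n) E12) = 0 := by rw [h]; simp
  rw [adPL_pow, psi_pl, phi_tt] at h2
  have h3 : (Polynomial.X : Polynomial ℚ) ^ n = 0 := by
    have := congrArg GG.snd h2
    simpa using this
  exact pow_ne_zero n Polynomial.X_ne_zero h3
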